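/- (Necessary conditions at an optimum.) Let N ≥ 1, b_max > 0, let y_1, …, y_M ∈ ℝ^N have positive weights w_i^y, and let w_1^x, …, w_L^x > 0. Suppose the locations x_1, …, x_L ∈ ℝ^N form a local minimum of the function x ↦ D(x) = ∫_0^{b_max} b^{-(N-1)} ∫_{ℝ^N} (F̃(m,b) - F(m,b))² dm db over (ℝ^N)^L, and suppose the points are in general position in the sense that x_ξ ≠ y_i for all ξ, i and x_ξ ≠ x_i for all ξ ≠ i. Then for every ξ ∈ {1,…,L} and η ∈ {1,…,N}: Σ_{i=1}^L w_i^x (x_ξ^{(η)} - x_i^{(η)}) · Ei(-‖x_ξ - x_i‖²/(4 b_max²)) = Σ_{i=1}^M w_i^y (x_ξ^{(η)} - y_i^{(η)}) · Ei(-‖x_ξ - y_i‖²/(4 b_max²)), where the i = ξ term of the left-hand sum is interpreted as 0. -/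

import Mathlib

open MeasureTheory Real

/-- `negEi z` is the exponential integral `Ei(-z)`, defined for `z > 0` by
`Ei(-z) = -∫_z^∞ (e^{-t}/t) dt`. -/
noncomputable def negEi (z : ℝ) : ℝ := -∫ t in Set.Ioi z, Real.exp (-t) / t

/-!
Integrating out `m` with the Gaussian overlap formula
`∫ K_b(p, m) K_b(q, m) dm = (√π b)^N exp(-‖p - q‖² / (4b²))` turns `D` into the pair energy
`π^{N/2} ∑_{a,a'} w_a w_{a'} φ(‖z_a - z_{a'}‖²)` of the signed mixture with atoms `y_i` (weights
`w_i^y`) and `x_j` (weights `-w_j^x`), where `φ(c) = ∫_0^{b_max} b exp(-c / (4b²)) db`.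
The primitive `b²/2 · exp(-c/(4b²)) + c/8 · Ei(-c/(4b²))` in `b` vanishes as `b → 0⁺`, so
`φ'(c) = Ei(-c / (4 b_max²)) / 8` for `c > 0`. Hence the partial derivative of `D` in `x_ξ^{(η)}`
is `-π^{N/2} w_ξ^x / 2` times the difference of the two sides, and it vanishes at a local minimum;
general position keeps every distance from `x_ξ` positive, where `φ` is differentiable.
-/

open Set Finset Function Filter Topology

section Gaussian

variable {κ : Type*} [Fintype κ]

def sqDist (p q : κ → ℝ) : ℝ := ∑ k, (p k - q k) ^ 2

lemma sqDist_comm (p q : κ → ℝ) : sqDist p q = sqDist q p := by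
  simp only [sqDist, ← neg_sub (p _), neg_sq]

lemma sqDist_self (p : κ → ℝ) : sqDist p p = 0 := by
  simp [sqDist]

lemma sqDist_nonneg (p q : κ → ℝ) : 0 ≤ sqDist p q := by
  unfold sqDist; positivity

lemma sqDist_pos_of_ne {p q : κ → ℝ} (h : p ≠ q) : 0 < sqDist p q := by
  obtain ⟨k, hk⟩ := Function.ne_iff.1 h
  exact sum_pos' (fun _ _ => sq_nonneg _) ⟨k, mem_univ _, by positivity [sub_ne_zero.2 hk]⟩

noncomputable def gaussKernel (b : ℝ) (p m : κ → ℝ) : ℝ :=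
  ∏ k, exp (-(p k - m k) ^ 2 / (2 * b ^ 2))

lemma exp_mul_exp_eq_exp_mul_gaussian {b : ℝ} (hb : b ≠ 0) (a c s : ℝ) :
    exp (-(a - s) ^ 2 / (2 * b ^ 2)) * exp (-(c - s) ^ 2 / (2 * b ^ 2))
      = exp (-(a - c) ^ 2 / (4 * b ^ 2)) * exp (-(1 / b ^ 2) * (s - (a + c) / 2) ^ 2) := by
  rw [← exp_add, ← exp_add]
  congr 1
  field_simp
  ring

lemma integrable_exp_mul_exp {b : ℝ} (hb : b ≠ 0) (a c : ℝ) :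
    Integrable fun s => exp (-(a - s) ^ 2 / (2 * b ^ 2)) * exp (-(c - s) ^ 2 / (2 * b ^ 2)) := by
  simp_rw [exp_mul_exp_eq_exp_mul_gaussian hb]
  exact ((integrable_exp_neg_mul_sq (by positivity)).comp_sub_right _).const_mul _

lemma integral_exp_mul_exp {b : ℝ} (hb : 0 < b) (a c : ℝ) :
    ∫ s, exp (-(a - s) ^ 2 / (2 * b ^ 2)) * exp (-(c - s) ^ 2 / (2 * b ^ 2))
      = √π * b * exp (-(a - c) ^ 2 / (4 * b ^ 2)) := by
  simp_rw [exp_mul_exp_eq_exp_mul_gaussian hb.ne']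
  rw [integral_const_mul, integral_sub_right_eq_self (fun s => exp (-(1 / b ^ 2) * s ^ 2)),
    integral_gaussian, div_div_eq_mul_div, div_one, sqrt_mul pi_pos.le, sqrt_sq hb.le]
  ring

lemma gaussKernel_mul_gaussKernel (b : ℝ) (p q m : κ → ℝ) :
    gaussKernel b p m * gaussKernel b q m
      = ∏ k, exp (-(p k - m k) ^ 2 / (2 * b ^ 2)) * exp (-(q k - m k) ^ 2 / (2 * b ^ 2)) :=
  prod_mul_distrib.symm

lemma integrable_gaussKernel_mul {b : ℝ} (hb : b ≠ 0) (p q : κ → ℝ) :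
    Integrable fun m => gaussKernel b p m * gaussKernel b q m := by
  simp_rw [gaussKernel_mul_gaussKernel]
  exact Integrable.fintype_prod
    (f := fun k s => exp (-(p k - s) ^ 2 / (2 * b ^ 2)) * exp (-(q k - s) ^ 2 / (2 * b ^ 2)))
    fun k => integrable_exp_mul_exp hb _ _

lemma integral_gaussKernel_mul {b : ℝ} (hb : 0 < b) (p q : κ → ℝ) :
    ∫ m, gaussKernel b p m * gaussKernel b q m
      = (√π * b) ^ Fintype.card κ * exp (-sqDist p q / (4 * b ^ 2)) := by
  simp_rw [gaussKernel_mul_gaussKernel]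
  rw [integral_fintype_prod_volume_eq_prod
    (fun k s => exp (-(p k - s) ^ 2 / (2 * b ^ 2)) * exp (-(q k - s) ^ 2 / (2 * b ^ 2)))]
  simp_rw [integral_exp_mul_exp hb, prod_mul_distrib, prod_const, ← exp_sum, sqDist, ← sum_div,
    ← sum_neg_distrib, card_univ, mul_pow]

lemma integral_sq_sum_gaussKernel {ι : Type*} [Fintype ι] {b : ℝ} (hb : 0 < b) (w : ι → ℝ)
    (z : ι → κ → ℝ) :
    ∫ m, (∑ a, w a * gaussKernel b (z a) m) ^ 2
      = (√π * b) ^ Fintype.card κ *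
          ∑ a, ∑ a', w a * w a' * exp (-sqDist (z a) (z a') / (4 * b ^ 2)) := by
  have hexpand : ∀ m, (∑ a, w a * gaussKernel b (z a) m) ^ 2
      = ∑ a, ∑ a', w a * w a' * (gaussKernel b (z a) m * gaussKernel b (z a') m) := fun m => by
    rw [sq, sum_mul_sum]
    exact sum_congr rfl fun _ _ => sum_congr rfl fun _ _ => by ring
  have hint : ∀ a a', Integrable fun m =>
      w a * w a' * (gaussKernel b (z a) m * gaussKernel b (z a') m) :=
    fun a a' => (integrable_gaussKernel_mul hb.ne' _ _).const_mul _
  simp_rw [hexpand]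
  rw [integral_finsetSum _ fun a _ => integrable_finsetSum _ fun a' _ => hint a a']
  simp_rw [integral_finsetSum _ fun a' _ => hint _ a', integral_const_mul,
    integral_gaussKernel_mul hb, mul_sum]
  exact sum_congr rfl fun _ _ => sum_congr rfl fun _ _ => by ring

end Gaussian

section ExponentialIntegral

lemma integrableOn_exp_neg_div_Ioi {a : ℝ} (ha : 0 < a) :
    IntegrableOn (fun t => exp (-t) / t) (Ioi a) := by
  refine Integrable.mono' ((integrableOn_exp_neg_Ioi a).div_const a)
    (((by fun_prop : Continuous fun t => exp (-t)).continuousOn.div continuousOn_id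
      fun t ht => (ha.trans ht).ne').aestronglyMeasurable measurableSet_Ioi) ?_
  filter_upwards [ae_restrict_mem measurableSet_Ioi] with t ht
  rw [norm_div, norm_of_nonneg (exp_pos _).le, norm_of_nonneg (ha.trans ht).le]
  gcongr
  exact ht.le

lemma abs_negEi_le {z : ℝ} (hz : 0 < z) : |negEi z| ≤ exp (-z) / z := by
  rw [negEi, abs_neg, ← norm_eq_abs]
  calc ‖∫ t in Ioi z, exp (-t) / t‖ ≤ ∫ t in Ioi z, exp (-t) / z := by
        refine norm_integral_le_of_norm_le ((integrableOn_exp_neg_Ioi z).div_const z) ?_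
        filter_upwards [ae_restrict_mem measurableSet_Ioi] with t ht
        rw [norm_div, norm_of_nonneg (exp_pos _).le, norm_of_nonneg (hz.trans ht).le]
        gcongr
        exact ht.le
    _ = exp (-z) / z := by rw [integral_div, integral_exp_neg_Ioi]

lemma hasDerivAt_negEi {z : ℝ} (hz : 0 < z) : HasDerivAt negEi (exp (-z) / z) z := by
  have ha : 0 < z / 2 := half_pos hz
  have hcont : ∀ w, 0 < w → ContinuousAt (fun t => exp (-t) / t) w :=
    fun w hw => (by fun_prop : Continuous fun t => exp (-t)).continuousAt.div continuousAt_id hw.ne'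
  have hsplit : ∀ w, z / 2 < w →
      negEi w = (∫ t in z / 2..w, exp (-t) / t) - ∫ t in Ioi (z / 2), exp (-t) / t := by
    intro w hw
    rw [negEi, intervalIntegral.integral_of_le hw.le, ← Ioc_union_Ioi_eq_Ioi hw.le,
      setIntegral_union (Ioc_disjoint_Ioi le_rfl) measurableSet_Ioi
        ((integrableOn_exp_neg_div_Ioi ha).mono_set Ioc_subset_Ioi_self)
        ((integrableOn_exp_neg_div_Ioi ha).mono_set (Ioi_subset_Ioi hw.le))]
    ring
  have hint : IntervalIntegrable (fun t => exp (-t) / t) volume (z / 2) z :=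
    (intervalIntegrable_iff_integrableOn_Ioc_of_le (half_le_self hz.le)).2
      ((integrableOn_exp_neg_div_Ioi ha).mono_set Ioc_subset_Ioi_self)
  refine ((intervalIntegral.integral_hasDerivAt_right hint
    (ContinuousAt.stronglyMeasurableAtFilter isOpen_Ioi (fun w hw => hcont w hw) z hz)
    (hcont z hz)).sub_const (∫ t in Ioi (z / 2), exp (-t) / t)).congr_of_eventuallyEq ?_
  filter_upwards [eventually_gt_nhds (half_lt_self hz)] with w hw
  exact hsplit w hw

end ExponentialIntegral

section OverlapProfile

noncomputable def overlapProfile (bmax c : ℝ) : ℝ :=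
  ∫ b in Ioc 0 bmax, b * exp (-c / (4 * b ^ 2))

noncomputable def overlapPrimitive (c b : ℝ) : ℝ :=
  b ^ 2 / 2 * exp (-c / (4 * b ^ 2)) + c / 8 * negEi (c / (4 * b ^ 2))

lemma integrableOn_overlapProfile_integrand (bmax : ℝ) {c : ℝ} (hc : 0 ≤ c) :
    IntegrableOn (fun b => b * exp (-c / (4 * b ^ 2))) (Ioc 0 bmax) := by
  refine Measure.integrableOn_of_bounded (M := bmax) measure_Ioc_lt_top.ne
    (by fun_prop : Measurable fun b : ℝ => b * exp (-c / (4 * b ^ 2))).aestronglyMeasurable ?_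
  filter_upwards [ae_restrict_mem measurableSet_Ioc] with b hb
  rw [norm_mul, norm_of_nonneg hb.1.le, norm_of_nonneg (exp_pos _).le]
  calc b * exp (-c / (4 * b ^ 2)) ≤ b * 1 :=
        mul_le_mul_of_nonneg_left (exp_le_one_iff.2
          (div_nonpos_of_nonpos_of_nonneg (neg_nonpos.2 hc) (by positivity))) hb.1.le
    _ ≤ bmax := by simpa using hb.2

lemma hasDerivAt_overlapPrimitive_right {c b : ℝ} (hc : 0 < c) (hb : 0 < b) :
    HasDerivAt (overlapPrimitive c) (b * exp (-c / (4 * b ^ 2))) b := by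
  have hz : 0 < c / (4 * b ^ 2) := by positivity
  have hq : HasDerivAt (fun w => c / (4 * w ^ 2)) (-(c / (2 * b ^ 3))) b := by
    refine ((hasDerivAt_const b c).div ((hasDerivAt_pow 2 b).const_mul 4)
      (by positivity)).congr_deriv ?_
    field_simp
    ring
  have hexp := hq.fun_neg.exp
  have hnegEi := (hasDerivAt_negEi hz).comp b hq
  simp only [← neg_div] at hexp
  refine ((((hasDerivAt_pow 2 b).div_const 2).fun_mul hexp).fun_add
    (hnegEi.const_mul (c / 8))).congr_deriv ?_
  field_simp
  ring

lemma abs_overlapPrimitive_le {c b : ℝ} (hc : 0 < c) (hb : 0 < b) :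
    |overlapPrimitive c b| ≤ b ^ 2 := by
  have hz : 0 < c / (4 * b ^ 2) := by positivity
  have hE : exp (-c / (4 * b ^ 2)) ≤ 1 :=
    exp_le_one_iff.2 (div_nonpos_of_nonpos_of_nonneg (neg_nonpos.2 hc.le) (by positivity))
  have hEi : |c / 8 * negEi (c / (4 * b ^ 2))| ≤ b ^ 2 / 2 :=
    calc |c / 8 * negEi (c / (4 * b ^ 2))|
        ≤ c / 8 * (exp (-(c / (4 * b ^ 2))) / (c / (4 * b ^ 2))) := by
          rw [abs_mul, abs_of_pos (by positivity)]
          gcongr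
          exact abs_negEi_le hz
      _ ≤ c / 8 * (1 / (c / (4 * b ^ 2))) := by
          gcongr
          exact exp_le_one_iff.2 (neg_nonpos.2 hz.le)
      _ = b ^ 2 / 2 := by field_simp; ring
  rw [overlapPrimitive]
  refine (abs_add_le _ _).trans ?_
  rw [abs_mul, abs_of_pos (by positivity : 0 < b ^ 2 / 2), abs_of_pos (exp_pos _)]
  nlinarith

lemma tendsto_overlapPrimitive_zero {c : ℝ} (hc : 0 < c) :
    Tendsto (overlapPrimitive c) (𝓝[>] 0) (𝓝 0) := by
  refine squeeze_zero_norm' ?_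
    (((continuous_pow 2).tendsto' (0 : ℝ) 0 (by simp)).mono_left nhdsWithin_le_nhds)
  filter_upwards [self_mem_nhdsWithin] with b (hb : 0 < b)
  exact abs_overlapPrimitive_le hc hb

lemma overlapProfile_eq_overlapPrimitive {bmax c : ℝ} (hbmax : 0 < bmax) (hc : 0 < c) :
    overlapProfile bmax c = overlapPrimitive c bmax := by
  rw [overlapProfile, ← intervalIntegral.integral_of_le hbmax.le,
    intervalIntegral.integral_eq_sub_of_hasDerivAt_of_tendsto hbmax
      (fun b hb => hasDerivAt_overlapPrimitive_right hc hb.1)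
      ((intervalIntegrable_iff_integrableOn_Ioc_of_le hbmax.le).2
        (integrableOn_overlapProfile_integrand bmax hc.le))
      (tendsto_overlapPrimitive_zero hc)
      ((hasDerivAt_overlapPrimitive_right hc hbmax).continuousAt.tendsto.mono_left
        nhdsWithin_le_nhds), sub_zero]

lemma hasDerivAt_overlapPrimitive_left {c b : ℝ} (hc : 0 < c) (hb : 0 < b) :
    HasDerivAt (fun c => overlapPrimitive c b) (negEi (c / (4 * b ^ 2)) / 8) c := by
  have hz : 0 < c / (4 * b ^ 2) := by positivity
  have hq := (hasDerivAt_id' c).div_const (4 * b ^ 2)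
  have hexp := hq.fun_neg.exp
  have hnegEi := (hasDerivAt_negEi hz).comp c hq
  simp only [comp_def, ← neg_div] at hexp hnegEi
  refine ((hexp.const_mul (b ^ 2 / 2)).fun_add
    (((hasDerivAt_id' c).div_const 8).fun_mul hnegEi)).congr_deriv ?_
  field_simp
  ring

lemma hasDerivAt_overlapProfile {bmax c : ℝ} (hbmax : 0 < bmax) (hc : 0 < c) :
    HasDerivAt (overlapProfile bmax) (negEi (c / (4 * bmax ^ 2)) / 8) c :=
  (hasDerivAt_overlapPrimitive_left hc hbmax).congr_of_eventuallyEq <|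
    (eventually_gt_nhds hc).mono fun _ hc' => overlapProfile_eq_overlapPrimitive hbmax hc'

end OverlapProfile

section PairEnergy

variable {ι κ : Type*} [Fintype ι] [Fintype κ]

noncomputable def pairEnergy (φ : ℝ → ℝ) (w : ι → ℝ) (z : ι → κ → ℝ) : ℝ :=
  ∑ a, ∑ a', w a * w a' * φ (sqDist (z a) (z a'))

lemma sum_sum_of_symm_eq_diag_add_erase [DecidableEq ι] {f : ι → ι → ℝ}
    (hf : ∀ a a', f a a' = f a' a) (c : ι) :
    ∑ a, ∑ a', f a a' = f c c + 2 * ∑ a ∈ univ.erase c, f c a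
      + ∑ a ∈ univ.erase c, ∑ a' ∈ univ.erase c, f a a' := by
  simp_rw [← add_sum_erase univ _ (mem_univ c), sum_add_distrib, hf _ c]
  ring

lemma pairEnergy_update [DecidableEq ι] (φ : ℝ → ℝ) (w : ι → ℝ) (z : ι → κ → ℝ) (c : ι)
    (p : κ → ℝ) :
    pairEnergy φ w (update z c p) = w c * w c * φ 0
      + 2 * ∑ a ∈ univ.erase c, w c * w a * φ (sqDist p (z a))
      + ∑ a ∈ univ.erase c, ∑ a' ∈ univ.erase c, w a * w a' * φ (sqDist (z a) (z a')) := by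
  have hz : ∀ a ∈ univ.erase c, update z c p a = z a :=
    fun a ha => update_of_ne (ne_of_mem_erase ha) _ _
  rw [pairEnergy, sum_sum_of_symm_eq_diag_add_erase
      (fun a a' => by rw [sqDist_comm, mul_comm (w a)]) c, update_self, sqDist_self,
    sum_congr rfl fun a ha => by rw [hz a ha],
    sum_congr rfl fun a ha => sum_congr rfl fun a' ha' => by rw [hz a ha, hz a' ha']]

lemma hasDerivAt_sqDist_update [DecidableEq κ] (p q : κ → ℝ) (η : κ) :
    HasDerivAt (fun t => sqDist (update p η t) q) (2 * (p η - q η)) (p η) := by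
  have hcoord : ∀ k, HasDerivAt (fun t => (update p η t k - q k) ^ 2)
      (2 * (p k - q k) * (Pi.single η 1 : κ → ℝ) k) (p η) := fun k => by
    simpa using ((hasDerivAt_pi.1 (hasDerivAt_update p η (p η)) k).sub_const (q k)).fun_pow 2
  refine (HasDerivAt.fun_sum fun k _ => hcoord k).congr_deriv ?_
  simp [Pi.single_apply]

lemma hasDerivAt_pairEnergy_update [DecidableEq ι] [DecidableEq κ] {φ φ' : ℝ → ℝ}
    (w : ι → ℝ) (z : ι → κ → ℝ) (c : ι) (η : κ)
    (hφ : ∀ a ≠ c, HasDerivAt φ (φ' (sqDist (z c) (z a))) (sqDist (z c) (z a))) :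
    HasDerivAt (fun t => pairEnergy φ w (update z c (update (z c) η t)))
      (4 * w c * ∑ a, w a * (z c η - z a η) * φ' (sqDist (z c) (z a))) (z c η) := by
  have hterm : ∀ a ∈ univ.erase c,
      HasDerivAt (fun t => w c * w a * φ (sqDist (update (z c) η t) (z a)))
        (w c * w a * (φ' (sqDist (z c) (z a)) * (2 * (z c η - z a η)))) (z c η) :=
    fun a ha => ((hφ a (ne_of_mem_erase ha)).comp_of_eq (z c η)
      (hasDerivAt_sqDist_update _ _ η) (by rw [update_eq_self])).const_mul _
  simp_rw [pairEnergy_update]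
  refine (((HasDerivAt.fun_sum hterm).const_mul 2).const_add _).add_const _ |>.congr_deriv ?_
  rw [← sum_erase univ (a := c) (by rw [sub_self, mul_zero, zero_mul]), mul_sum, mul_sum]
  exact sum_congr rfl fun _ _ => by ring

end PairEnergy

lemma setIntegral_integral_sq_sum_gaussKernel {ι κ : Type*} [Fintype ι] [Fintype κ] [Nonempty κ]
    (bmax : ℝ) (w : ι → ℝ) (z : ι → κ → ℝ) :
    ∫ b in Ioc 0 bmax, 1 / b ^ (Fintype.card κ - 1) * ∫ m, (∑ a, w a * gaussKernel b (z a) m) ^ 2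
      = √π ^ Fintype.card κ * pairEnergy (overlapProfile bmax) w z := by
  obtain ⟨n, hn⟩ := Nat.exists_eq_add_one_of_ne_zero (Fintype.card_ne_zero (α := κ))
  have hinner : ∀ b ∈ Ioc 0 bmax,
      1 / b ^ (Fintype.card κ - 1) * ∫ m, (∑ a, w a * gaussKernel b (z a) m) ^ 2
        = √π ^ Fintype.card κ *
            ∑ a, ∑ a', w a * w a' * (b * exp (-sqDist (z a) (z a') / (4 * b ^ 2))) := by
    intro b hb
    have hpull : ∑ a, ∑ a', w a * w a' * (b * exp (-sqDist (z a) (z a') / (4 * b ^ 2)))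
        = b * ∑ a, ∑ a', w a * w a' * exp (-sqDist (z a) (z a') / (4 * b ^ 2)) := by
      simp_rw [mul_sum]
      exact sum_congr rfl fun _ _ => sum_congr rfl fun _ _ => by ring
    have hb0 : b ≠ 0 := hb.1.ne'
    rw [integral_sq_sum_gaussKernel hb.1, hpull, hn, Nat.add_sub_cancel, mul_pow]
    field_simp
    ring
  have hint : ∀ a a', IntegrableOn
      (fun b => w a * w a' * (b * exp (-sqDist (z a) (z a') / (4 * b ^ 2)))) (Ioc 0 bmax) :=
    fun a a' => (integrableOn_overlapProfile_integrand bmax (sqDist_nonneg _ _)).const_mul _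
  rw [setIntegral_congr_fun measurableSet_Ioc hinner, integral_const_mul,
    integral_finsetSum _ fun a _ => integrable_finsetSum _ fun a' _ => hint a a']
  simp_rw [integral_finsetSum _ fun a' _ => hint _ a', integral_const_mul]
  rfl

theorem necessary_conditions_at_optimum_general
    (N M L : ℕ) (bmax : ℝ) (hb : 0 < bmax)
    (y : Fin M → Fin N → ℝ) (wy : Fin M → ℝ)
    (wx : Fin L → ℝ) (hwx : ∀ i, 0 < wx i)
    (x : Fin L → Fin N → ℝ)
    (hmin : IsLocalMin (fun xs : Fin L → Fin N → ℝ =>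
      ∫ b in Set.Ioc (0:ℝ) bmax, (1 / b ^ (N - 1)) *
        ∫ m : Fin N → ℝ,
          ((∑ i, wy i * ∏ k, Real.exp (-(y i k - m k) ^ 2 / (2 * b ^ 2)))
            - ∑ i, wx i * ∏ k, Real.exp (-(xs i k - m k) ^ 2 / (2 * b ^ 2))) ^ 2) x)
    (hxy : ∀ (ξ : Fin L) (i : Fin M), x ξ ≠ y i)
    (hxx : ∀ (ξ i : Fin L), ξ ≠ i → x ξ ≠ x i) :
    ∀ (ξ : Fin L) (η : Fin N),
      (∑ i, wx i * (x ξ η - x i η) * negEi ((∑ k, (x ξ k - x i k) ^ 2) / (4 * bmax ^ 2)))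
        = ∑ i, wy i * (x ξ η - y i η) * negEi ((∑ k, (x ξ k - y i k) ^ 2) / (4 * bmax ^ 2)) := by
  intro ξ η
  have : Nonempty (Fin N) := ⟨η⟩
  have hmin' : IsLocalMin
      (fun xs => √π ^ N * pairEnergy (overlapProfile bmax) (Sum.elim wy (-wx)) (Sum.elim y xs)) x := by
    convert hmin using 2 with xs
    simpa [Fintype.sum_sum_type, gaussKernel, sub_eq_add_neg] using
      (setIntegral_integral_sq_sum_gaussKernel bmax (Sum.elim wy (-wx)) (Sum.elim y xs)).symm
  have hline : IsLocalMin (fun t => √π ^ N * pairEnergy (overlapProfile bmax) (Sum.elim wy (-wx))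
      (update (Sum.elim y x) (.inr ξ) (update (x ξ) η t))) (x ξ η) := by
    simp_rw [Sum.update_elim_inr]
    exact IsLocalMin.comp_continuous (g := fun t => update x ξ (update (x ξ) η t)) (b := x ξ η)
      (by simpa only [update_eq_self] using hmin')
      (by fun_prop : Continuous fun t => update x ξ (update (x ξ) η t)).continuousAt
  have hderiv := hasDerivAt_pairEnergy_update (φ' := fun d => negEi (d / (4 * bmax ^ 2)) / 8)
    (Sum.elim wy (-wx)) (Sum.elim y x) (.inr ξ) η fun a ha => hasDerivAt_overlapProfile hb
      (sqDist_pos_of_ne (by cases a with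
        | inl i => exact hxy ξ i
        | inr j => exact hxx ξ j fun h => ha (h ▸ rfl)))
  have hzero := hline.hasDerivAt_eq_zero (hderiv.const_mul _)
  have hcoef : √π ^ N * (4 * Sum.elim wy (-wx) (.inr ξ)) ≠ 0 :=
    mul_ne_zero (pow_ne_zero _ (sqrt_pos.2 pi_pos).ne') (by simp [(hwx ξ).ne'])
  rw [← mul_assoc, mul_eq_zero, or_iff_right hcoef, Fintype.sum_sum_type] at hzero
  simp only [Sum.elim_inl, Sum.elim_inr, Pi.neg_apply, neg_mul, sum_neg_distrib, mul_div_assoc',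
    ← sum_div, sqDist] at hzero
  linarith

theorem necessary_conditions_at_optimum
    (N M L : ℕ) (hN : 1 ≤ N) (bmax : ℝ) (hb : 0 < bmax)
    (y : Fin M → Fin N → ℝ) (wy : Fin M → ℝ) (hwy : ∀ i, 0 < wy i)
    (wx : Fin L → ℝ) (hwx : ∀ i, 0 < wx i)
    (x : Fin L → Fin N → ℝ)
    (hmin : IsLocalMin (fun xs : Fin L → Fin N → ℝ =>
      ∫ b in Set.Ioc (0:ℝ) bmax, (1 / b ^ (N - 1)) *
        ∫ m : Fin N → ℝ,
          ((∑ i, wy i * ∏ k, Real.exp (-(y i k - m k) ^ 2 / (2 * b ^ 2)))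
            - ∑ i, wx i * ∏ k, Real.exp (-(xs i k - m k) ^ 2 / (2 * b ^ 2))) ^ 2) x)
    (hxy : ∀ (ξ : Fin L) (i : Fin M), x ξ ≠ y i)
    (hxx : ∀ (ξ i : Fin L), ξ ≠ i → x ξ ≠ x i) :
    ∀ (ξ : Fin L) (η : Fin N),
      (∑ i, wx i * (x ξ η - x i η) * negEi ((∑ k, (x ξ k - x i k) ^ 2) / (4 * bmax ^ 2)))
        = ∑ i, wy i * (x ξ η - y i η) * negEi ((∑ k, (x ξ k - y i k) ^ 2) / (4 * bmax ^ 2)) :=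
  necessary_conditions_at_optimum_general N M L bmax hb y wy wx hwx x hmin hxy hxx
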